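/- For every positive integer n, the alternating sum over all integers k of (-1)^k * q^((9k²+3k)/2) * [2n choose n+3k]_q equals (1 + q^n) · (q³; q³)_{n-1} / (q; q)_{n-1}, i.e. (1+q^n) ∏_{i=1}^{n-1} (1 + q^i + q^{2i}). -/
import Mathlib

open Polynomial

/-- The Gaussian (q-)binomial coefficient as a polynomial in `q = X`, via the
q-Pascal recurrence `[n+1, k+1] = [n, k] + q^(k+1) [n, k+1]`. -/
noncomputable def gbinom : ℕ → ℕ → Polynomial ℤ
  | _, 0 => 1
  | 0, _ + 1 => 0
  | n + 1, k + 1 => gbinom n k + Polynomial.X ^ (k + 1) * gbinom n (k + 1)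

/-- Gaussian binomial with integer lower index, zero for negative lower index. -/
noncomputable def gbinomZ (N : ℕ) (r : ℤ) : Polynomial ℤ := if 0 ≤ r then gbinom N r.toNat else 0

lemma gbinom_zero (n : ℕ) : gbinom n 0 = 1 := by cases n <;> rfl

lemma gbinom_eq_zero : ∀ {n k : ℕ}, n < k → gbinom n k = 0 := by
  intro n
  induction n with
  | zero => intro k hk; match k, hk with | k+1, _ => rfl
  | succ n ih =>
    intro k hk
    match k, hk with
    | k+1, hk =>
      show gbinom n k + Polynomial.X ^ (k + 1) * gbinom n (k + 1) = 0
      rw [ih (show n < k by omega), ih (show n < k + 1 by omega), mul_zero, add_zero]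

lemma gbinom_one : ∀ n : ℕ, gbinom n 1 = ∑ i ∈ Finset.range n, X ^ i := by
  intro n
  induction n with
  | zero => simp [gbinom]
  | succ n ih =>
    show gbinom n 0 + X ^ 1 * gbinom n 1 = _
    rw [gbinom_zero, ih, Finset.mul_sum, Finset.sum_range_succ' (f := fun i => X ^ i)]
    simp only [pow_succ', pow_zero, mul_one]
    rw [add_comm]

lemma pascal2 : ∀ n k : ℕ, gbinom (n+1) (k+1) = X ^ (n-k) * gbinom n k + gbinom n (k+1) := by
  intro n
  induction n with
  | zero =>
    intro k
    match k with
    | 0 =>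
      show gbinom 0 0 + X ^ 1 * gbinom 0 1 = X ^ 0 * gbinom 0 0 + gbinom 0 1
      rw [gbinom_zero, show gbinom 0 1 = 0 from rfl]; ring
    | k+1 =>
      show gbinom 0 (k+1) + X ^ (k+2) * gbinom 0 (k+2) = X ^ (0-(k+1)) * gbinom 0 (k+1) + gbinom 0 (k+2)
      rw [show gbinom 0 (k+1) = 0 from rfl, show gbinom 0 (k+2) = 0 from rfl]; ring
  | succ n ih =>
    intro k
    match k with
    | 0 =>
      show gbinom (n+2) 1 = X ^ (n+1) * gbinom (n+1) 0 + gbinom (n+1) 1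
      rw [gbinom_one, gbinom_one, gbinom_zero, mul_one, Finset.sum_range_succ]
      ring
    | k+1 =>
      calc gbinom (n+1+1) (k+1+1)
          = gbinom (n+1) (k+1) + X^(k+2) * gbinom (n+1) (k+2) := rfl
        _ = (X^(n-k) * gbinom n k + gbinom n (k+1)) + X^(k+2) * (X^(n-(k+1)) * gbinom n (k+1) + gbinom n (k+2)) := by
            rw [ih k, ih (k+1)]
        _ = X^(n-k) * (gbinom n k + X^(k+1) * gbinom n (k+1)) + (gbinom n (k+1) + X^(k+2) * gbinom n (k+2)) := by
            rcases lt_or_ge k n with h | h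
            · rw [show X^(k+2) * (X^(n-(k+1)) * gbinom n (k+1) + gbinom n (k+2))
                  = X^(k+2+(n-(k+1))) * gbinom n (k+1) + X^(k+2) * gbinom n (k+2) by rw [pow_add]; ring,
                show k+2+(n-(k+1)) = n+1 by omega,
                show X^(n-k) * (gbinom n k + X^(k+1) * gbinom n (k+1))
                  = X^(n-k) * gbinom n k + X^(n-k+(k+1)) * gbinom n (k+1) by rw [pow_add]; ring,
                show n-k+(k+1) = n+1 by omega]
              ring
            · rw [gbinom_eq_zero (show n < k+1 by omega)]
              ring
        _ = X^((n+1)-(k+1)) * gbinom (n+1) (k+1) + gbinom (n+1) (k+2) := by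
            rw [Nat.succ_sub_succ]; rfl

lemma half_succ (k : ℕ) : (k+1)*k/2 = k*(k-1)/2 + k := by
  rcases k with _ | m
  · simp
  · obtain ⟨c, hc⟩ := Nat.even_mul_succ_self m
    have h4 : (m+1)*(m+1-1) = m*(m+1) := by simp [Nat.succ_sub_one]; ring
    have h3 : (m+1+1)*(m+1) = m*(m+1) + 2*(m+1) := by ring
    rw [h4, h3]
    omega

lemma genfun {A : Type*} [CommRing A] (ψ : Polynomial ℤ →+* A) (z : A) (N : ℕ) :
    ∏ i ∈ Finset.range N, (1 + z * (ψ X) ^ i) =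
    ∑ j ∈ Finset.range (N+1), ψ (gbinom N j) * (ψ X) ^ (j*(j-1)/2) * z ^ j := by
  set q : A := ψ X with hqdef
  induction N with
  | zero => simp [gbinom_zero, ← hqdef]
  | succ N ih =>
    rw [Finset.prod_range_succ, ih]
    set B : ℕ → A := fun j => ψ (gbinom N j) * q ^ (j*(j-1)/2) * z ^ j with hB
    set Cc : ℕ → A := fun j => match j with
      | 0 => 0
      | k+1 => q^N * B k * z with hCc
    have split : ∀ j ∈ Finset.range (N+2), ψ (gbinom (N+1) j) * q ^ (j*(j-1)/2) * z ^ j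
        = B j + Cc j := by
      intro j hj
      match j with
      | 0 => simp [hB, hCc, gbinom_zero]
      | k+1 =>
        have hk : k ≤ N := by simp at hj; omega
        rw [pascal2 N k, map_add, map_mul, map_pow, ← hqdef]
        show (q^(N-k) * ψ (gbinom N k) + ψ (gbinom N (k+1))) * q ^ ((k+1)*(k+1-1)/2) * z^(k+1)
          = B (k+1) + q^N * B k * z
        rw [Nat.succ_sub_one, hB]
        simp only [Nat.add_sub_cancel]
        have e1 : (k+1)*k/2 = k*(k-1)/2 + k := half_succ k
        have e2 : q^(N-k) * q^((k+1)*k/2) = q^N * q^(k*(k-1)/2) := by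
          rw [← pow_add, ← pow_add, e1, show N-k+(k*(k-1)/2+k) = N + k*(k-1)/2 by omega]
        calc (q^(N-k) * ψ (gbinom N k) + ψ (gbinom N (k+1))) * q ^ ((k+1)*k/2) * z^(k+1)
            = ψ (gbinom N (k+1)) * q^((k+1)*k/2) * z^(k+1)
              + (q^(N-k) * q^((k+1)*k/2)) * ψ (gbinom N k) * z^(k+1) := by ring
          _ = _ := by rw [e2]; ring
    rw [show ∑ j ∈ Finset.range (N+1+1), ψ (gbinom (N+1) j) * q ^ (j*(j-1)/2) * z ^ j
        = ∑ j ∈ Finset.range (N+2), (B j + Cc j) from Finset.sum_congr rfl split,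
      Finset.sum_add_distrib]
    have hBs : ∑ j ∈ Finset.range (N+2), B j = ∑ j ∈ Finset.range (N+1), B j := by
      rw [Finset.sum_range_succ, hB]
      simp [gbinom_eq_zero (Nat.lt_succ_self N)]
    have hCs : ∑ j ∈ Finset.range (N+2), Cc j = (∑ j ∈ Finset.range (N+1), B j) * (z * q^N) := by
      rw [Finset.sum_range_succ' (f := Cc), Finset.sum_mul]
      show (∑ k ∈ Finset.range (N+1), q^N * B k * z) + 0 = _
      rw [add_zero]
      exact Finset.sum_congr rfl fun k _ => by ring
    rw [hBs, hCs]
    ring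

section
variable {K : Type*} [Field K]

lemma cube_eq {u : K} (hu : u^2 = u - 1) : u^3 = -1 := by linear_combination (u+1)*hu

lemma ne_zero_of_rel {u : K} (hu : u^2 = u - 1) : u ≠ 0 := by
  intro h; rw [h] at hu; norm_num at hu

lemma one_sub_rel {ζ : K} (hζ : ζ^2 = ζ - 1) : (1-ζ)^2 = (1-ζ) - 1 := by linear_combination hζ

lemma zpow_three_eq {u : K} (hu : u^2 = u - 1) (t : ℤ) : u ^ (3*t) = (-1:K)^t := by
  rw [zpow_mul, show u ^ (3:ℤ) = u^(3:ℕ) from zpow_natCast u 3, cube_eq hu]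

lemma neg_one_zpow_natAbs (k : ℤ) : ((-1:K)) ^ (k.natAbs) = (-1:K) ^ k := by
  rcases Int.natAbs_eq k with h | h
  · conv_rhs => rw [h, zpow_natCast]
  · conv_rhs => rw [h, zpow_neg, zpow_natCast]
    rcases neg_one_pow_eq_or K k.natAbs with h' | h' <;> rw [h'] <;> norm_num

lemma rootsum {ζ : K} (hζ : ζ^2 = ζ - 1) (M : ℤ) :
    ζ^M + (1-ζ)^M + (-1:K)^M = if 3 ∣ M then 3 * (-1:K)^(M/3) else 0 := by
  have h1 : ζ ≠ 0 := ne_zero_of_rel hζ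
  have h2 : (1-ζ) ≠ 0 := ne_zero_of_rel (one_sub_rel hζ)
  have h3 : (-1:K) ≠ 0 := by norm_num
  have hM : M = 3*(M/3) + M % 3 := (Int.mul_ediv_add_emod M 3).symm
  have hr0 : 0 ≤ M % 3 := Int.emod_nonneg M (by norm_num)
  have hr3 : M % 3 < 3 := Int.emod_lt_of_pos M (by norm_num)
  have key : ∀ u : K, u ≠ 0 → u^2 = u - 1 → u^M = (-1:K)^(M/3) * u^(M % 3) := by
    intro u hu0 hu
    conv_lhs => rw [hM]
    rw [zpow_add₀ hu0, zpow_three_eq hu]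
  have keyneg : (-1:K)^M = (-1:K)^(M/3) * (-1:K)^(M % 3) := by
    conv_lhs => rw [hM]
    rw [zpow_add₀ h3, zpow_mul, show (-1:K) ^ (3:ℤ) = (-1:K)^(3:ℕ) from zpow_natCast _ 3,
      show ((-1:K))^(3:ℕ) = -1 by norm_num]
  rw [key ζ h1 hζ, key (1-ζ) h2 (one_sub_rel hζ), keyneg]
  interval_cases h : M % 3
  · rw [if_pos (by omega)]
    simp only [zpow_zero, mul_one]; ring
  · rw [if_neg (by omega)]
    simp only [zpow_one]
    ring
  · rw [if_neg (by omega)]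
    rw [show (2:ℤ) = ((2:ℕ):ℤ) by norm_num, zpow_natCast, zpow_natCast, zpow_natCast]
    linear_combination (2*(-1:K)^(M/3)) * hζ
end

section
variable {K : Type*} [Field K]
lemma half_cast (j : ℕ) : 2*((j*(j-1)/2 : ℕ):ℤ) = (j:ℤ)*((j:ℤ)-1) := by
  rcases j with _ | i
  · simp
  · obtain ⟨c, hc⟩ := Nat.even_mul_succ_self i
    have h1 : (i+1)*(i+1-1) = i*(i+1) := by simp [Nat.mul_comm]
    have h2 : i*(i+1)/2 = c := by omega
    rw [h1, h2]
    push_cast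
    nlinarith [hc]

theorem core (ψ : Polynomial ℤ →+* K) (ζ : K) (hq : ψ X ≠ 0) (hζ : ζ^2 = ζ - 1) (h3 : (3:K) ≠ 0) (m : ℕ) :
    ∑ k ∈ Finset.Icc (-((m:ℤ)+1)) ((m:ℤ)+1),
      ((-1:K) ^ k.natAbs * (ψ X) ^ ((9*k^2+3*k)/2) *
        (if 0 ≤ (m:ℤ)+1+3*k ∧ (m:ℤ)+1+3*k ≤ 2*(m+1) then
          ψ (gbinom (2*(m+1)) ((m:ℤ)+1+3*k).toNat) else 0))
    = (1 + (ψ X)^(m+1)) * ∏ i ∈ Finset.range m, (1 + (ψ X)^(i+1) + (ψ X)^(2*(i+1))) := by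
  set q : K := ψ X with hqdef
  have hζ0 : ζ ≠ 0 := ne_zero_of_rel hζ
  have hζ0' : (1-ζ) ≠ 0 := ne_zero_of_rel (one_sub_rel hζ)
  have hζinv : ζ⁻¹ = 1-ζ := by
    field_simp; linear_combination hζ
  have hζinv' : (1-ζ)⁻¹ = ζ := by
    field_simp; linear_combination hζ
  obtain ⟨c, hc2⟩ : ∃ c : ℕ, 2*c = (m+1)*m := by
    obtain ⟨d, hd⟩ := Nat.even_mul_succ_self m
    exact ⟨d, by rw [Nat.mul_comm (m+1) m]; omega⟩
  have hqc : (q^c : K) ≠ 0 := pow_ne_zero _ hq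
  set gK : ℕ → K := fun j => ψ (gbinom (2*(m+1)) j) with hgK
  set E : ℕ → ℤ := fun j => ((j*(j-1)/2 : ℕ) : ℤ) + (1-((m:ℤ)+1))*(j:ℤ) with hE
  set F : K → K := fun u => ∏ t ∈ Finset.range (2*(m+1)), (1 + u * q^((t:ℤ)+1-((m:ℤ)+1))) with hF
  set P : K := ∏ i ∈ Finset.range m, (1 + q^(i+1) + q^(2*(i+1))) with hP
  -- F expansion
  have Fexpand : ∀ u : K, F u = ∑ j ∈ Finset.range (2*(m+1)+1), gK j * q^(E j) * u^j := by
    intro u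
    calc F u = ∏ t ∈ Finset.range (2*(m+1)), (1 + (u * q^(1-((m:ℤ)+1))) * q^t) := by
          refine Finset.prod_congr rfl (fun t _ => ?_)
          rw [mul_assoc, ← zpow_natCast q t, ← zpow_add₀ hq,
            show (1-((m:ℤ)+1)+(t:ℤ)) = ((t:ℤ)+1-((m:ℤ)+1)) by ring]
      _ = ∑ j ∈ Finset.range (2*(m+1)+1), ψ (gbinom (2*(m+1)) j) * q^(j*(j-1)/2) * (u * q^(1-((m:ℤ)+1)))^j :=
          genfun ψ _ (2*(m+1))
      _ = _ := by
          refine Finset.sum_congr rfl (fun j _ => ?_)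
          rw [mul_pow, ← zpow_natCast (q ^ (1-((m:ℤ)+1))) j, ← zpow_mul,
            ← zpow_natCast q (j*(j-1)/2), hgK, hE]
          show _ = ψ (gbinom (2*(m+1)) j) * q ^ (((j*(j-1)/2 : ℕ):ℤ) + (1-((m:ℤ)+1))*(j:ℤ)) * u ^ j
          rw [zpow_add₀ hq]
          ring
  -- pairing
  have prodq : ∏ t ∈ Finset.range m, q^(-((t:ℤ)+1)) = (q^c)⁻¹ := by
    have h1 : ∀ t ∈ Finset.range m, q^(-((t:ℤ)+1)) = (q^(t+1:ℕ))⁻¹ := by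
      intro t _
      rw [zpow_neg, show ((t:ℤ)+1) = ((t+1:ℕ):ℤ) by push_cast; ring, zpow_natCast]
    rw [Finset.prod_congr rfl h1, Finset.prod_inv_distrib, Finset.prod_pow_eq_pow_sum]
    congr 1
    have h2 : ∑ t ∈ Finset.range (m+1), t = ∑ t ∈ Finset.range m, (t+1) := by
      rw [Finset.sum_range_succ' (f := fun t => t)]; simp
    have h3' := Finset.sum_range_id_mul_two (m+1)
    simp only [Nat.add_sub_cancel] at h3'
    obtain ⟨A, hA⟩ : ∃ A, (m+1)*m = A := ⟨_, rfl⟩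
    rw [hA] at h3'
    have hc2' := hc2
    rw [hA] at hc2'
    rw [← h2]
    have h4 : ∑ t ∈ Finset.range (m+1), t = c := by omega
    rw [h4]
  have ptl : ∀ (u : K), u^2 = u - 1 → ∀ t : ℕ,
      (1 + u * q^(-((t:ℤ)+1))) * (1 + u * q^(t+1:ℕ)) = u * q^(-((t:ℤ)+1)) * (1 + q^(t+1) + q^(2*(t+1))) := by
    intro u hu t
    have hw : q^(-((t:ℤ)+1)) = (q^(t+1:ℕ))⁻¹ := by
      rw [zpow_neg, show ((t:ℤ)+1) = ((t+1:ℕ):ℤ) by push_cast; ring, zpow_natCast]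
    have hwn : (q^(t+1:ℕ) : K) ≠ 0 := pow_ne_zero _ hq
    rw [hw, show 2*(t+1) = (t+1)*2 by ring, pow_mul]
    field_simp
    ring_nf
    linear_combination (q^(t+1:ℕ)) * hu
  have Fpair : ∀ u : K, u^2 = u - 1 → F u = (1+u) * (1+u*q^(m+1)) * u^m * (q^c)⁻¹ * P := by
    intro u hu
    rw [hF]
    show ∏ t ∈ Finset.range (2*(m+1)), (1 + u * q^((t:ℤ)+1-((m:ℤ)+1))) = _
    rw [show 2*(m+1) = (m+1)+(m+1) by ring, Finset.prod_range_add]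
    have hBpart : ∏ s ∈ Finset.range (m+1), (1 + u * q^(((m+1+s : ℕ):ℤ)+1-((m:ℤ)+1)))
        = (∏ s ∈ Finset.range m, (1 + u * q^(s+1:ℕ))) * (1 + u * q^(m+1:ℕ)) := by
      rw [Finset.prod_congr rfl (fun s _ => by
        rw [show (((m+1+s : ℕ):ℤ)+1-((m:ℤ)+1)) = ((s+1:ℕ):ℤ) by push_cast; ring, zpow_natCast]),
        Finset.prod_range_succ]
    have hApart : ∏ t ∈ Finset.range (m+1), (1 + u * q^((t:ℤ)+1-((m:ℤ)+1)))
        = (∏ t ∈ Finset.range m, (1 + u * q^(-((t:ℤ)+1)))) * (1 + u) := by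
      rw [← Finset.prod_range_reflect]
      have e1 : ∀ t ∈ Finset.range (m+1), (1 + u * q^((((m+1-1-t) : ℕ):ℤ)+1-((m:ℤ)+1))) = 1 + u * q^(-(t:ℤ)) := by
        intro t ht
        have htm : t ≤ m := by simp at ht; omega
        rw [show ((((m+1-1-t) : ℕ):ℤ)+1-((m:ℤ)+1)) = -(t:ℤ) by
          simp only [Nat.add_sub_cancel]
          rw [Nat.cast_sub htm]; ring]
      rw [Finset.prod_congr rfl e1, Finset.prod_range_succ' (f := fun t => 1 + u * q^(-(t:ℤ)))]
      have e2 : ∀ t ∈ Finset.range m, (1 + u * q^(-((t+1:ℕ):ℤ))) = 1 + u * q^(-((t:ℤ)+1)) := by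
        intro t _; norm_cast
      rw [Finset.prod_congr rfl e2]
      norm_num
    rw [hBpart, hApart]
    calc (∏ t ∈ Finset.range m, (1 + u * q^(-((t:ℤ)+1)))) * (1 + u) *
          ((∏ s ∈ Finset.range m, (1 + u * q^(s+1:ℕ))) * (1 + u * q^(m+1:ℕ)))
        = (1+u) * (1 + u * q^(m+1)) *
          ∏ t ∈ Finset.range m, ((1 + u * q^(-((t:ℤ)+1))) * (1 + u * q^(t+1:ℕ))) := by
          rw [Finset.prod_mul_distrib]; ring
      _ = (1+u) * (1 + u * q^(m+1)) *
          ∏ t ∈ Finset.range m, (u * q^(-((t:ℤ)+1)) * (1 + q^(t+1) + q^(2*(t+1)))) := by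
          rw [Finset.prod_congr rfl (fun t _ => ptl u hu t)]
      _ = _ := by
          rw [Finset.prod_mul_distrib, Finset.prod_mul_distrib, prodq,
            Finset.prod_const, Finset.card_range, ← hP]
          ring
  have Fneg : F (-1) = 0 := by
    rw [hF]
    refine Finset.prod_eq_zero (Finset.mem_range.mpr (show m < 2*(m+1) by omega)) ?_
    rw [show ((m:ℤ)+1-((m:ℤ)+1)) = 0 by ring, zpow_zero]
    ring
  -- the roots-of-unity filter
  set sf := (Finset.range (2*(m+1)+1)).filter (fun j : ℕ => (3:ℤ) ∣ ((j:ℤ)-((m:ℤ)+1))) with hsf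
  set tf := (Finset.Icc (-((m:ℤ)+1)) ((m:ℤ)+1)).filter
      (fun k => 0 ≤ (m:ℤ)+1+3*k ∧ (m:ℤ)+1+3*k ≤ 2*(m+1)) with htf
  set G : ℕ → K := fun j => gK j * q^(E j) * (3 * (-1:K)^(((j:ℤ)-((m:ℤ)+1))/3)) with hG
  set H : ℤ → K := fun k => (-1:K)^k.natAbs * q^((9*k^2+3*k)/2) *
      ψ (gbinom (2*(m+1)) ((m:ℤ)+1+3*k).toNat) with hH
  have L1 : ζ^(-((m:ℤ)+1)) * F ζ + (1-ζ)^(-((m:ℤ)+1)) * F (1-ζ) + (-1:K)^(-((m:ℤ)+1)) * F (-1)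
      = ∑ j ∈ sf, G j := by
    rw [Fexpand ζ, Fexpand (1-ζ), Fexpand (-1), Finset.mul_sum, Finset.mul_sum, Finset.mul_sum,
      ← Finset.sum_add_distrib, ← Finset.sum_add_distrib]
    have huu : ∀ (u : K), u ≠ 0 → ∀ j : ℕ, u^(-((m:ℤ)+1)) * (gK j * q^(E j) * u^j)
        = gK j * q^(E j) * u^((j:ℤ)-((m:ℤ)+1)) := by
      intro u hu0 j
      rw [show u^(-((m:ℤ)+1)) * (gK j * q^(E j) * u^j) = gK j * q^(E j) * (u^(-((m:ℤ)+1)) * u^(j:ℕ)) by ring,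
        ← zpow_natCast u j, ← zpow_add₀ hu0, show -((m:ℤ)+1)+(j:ℤ) = (j:ℤ)-((m:ℤ)+1) by ring]
    have perterm : ∀ j ∈ Finset.range (2*(m+1)+1),
        ζ^(-((m:ℤ)+1)) * (gK j * q^(E j) * ζ^j) + (1-ζ)^(-((m:ℤ)+1)) * (gK j * q^(E j) * (1-ζ)^j)
          + (-1:K)^(-((m:ℤ)+1)) * (gK j * q^(E j) * (-1:K)^j)
        = if (3:ℤ) ∣ ((j:ℤ)-((m:ℤ)+1)) then G j else 0 := by
      intro j _
      rw [huu ζ hζ0 j, huu (1-ζ) hζ0' j, huu (-1) (by norm_num) j, ← mul_add, ← mul_add,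
        rootsum hζ ((j:ℤ)-((m:ℤ)+1)), mul_ite, mul_zero, hG]
    rw [Finset.sum_congr rfl perterm, ← Finset.sum_filter]
  have R1 : ∑ k ∈ Finset.Icc (-((m:ℤ)+1)) ((m:ℤ)+1),
      ((-1:K) ^ k.natAbs * q ^ ((9*k^2+3*k)/2) *
        (if 0 ≤ (m:ℤ)+1+3*k ∧ (m:ℤ)+1+3*k ≤ 2*(m+1) then
          ψ (gbinom (2*(m+1)) ((m:ℤ)+1+3*k).toNat) else 0))
      = ∑ k ∈ tf, H k := by
    have perterm2 : ∀ k ∈ Finset.Icc (-((m:ℤ)+1)) ((m:ℤ)+1),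
        (-1:K) ^ k.natAbs * q ^ ((9*k^2+3*k)/2) *
          (if 0 ≤ (m:ℤ)+1+3*k ∧ (m:ℤ)+1+3*k ≤ 2*(m+1) then
            ψ (gbinom (2*(m+1)) ((m:ℤ)+1+3*k).toNat) else 0)
        = if 0 ≤ (m:ℤ)+1+3*k ∧ (m:ℤ)+1+3*k ≤ 2*(m+1) then H k else 0 := by
      intro k _
      rw [mul_ite, mul_zero, hH]
    rw [Finset.sum_congr rfl perterm2, ← Finset.sum_filter]
  have M : ∑ j ∈ sf, G j = ∑ k ∈ tf, (3 * (q^c)⁻¹ * H k) := by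
    refine Finset.sum_nbij' (i := fun j => ((j:ℤ)-((m:ℤ)+1))/3)
      (j := fun k => ((m:ℤ)+1+3*k).toNat) ?_ ?_ ?_ ?_ ?_
    · intro j hj
      rw [hsf] at hj
      simp only [Finset.mem_filter, Finset.mem_range] at hj
      rw [htf]
      simp only [Finset.mem_filter, Finset.mem_Icc]
      obtain ⟨hj1, hdvd⟩ := hj
      obtain ⟨k', hk'⟩ := hdvd
      omega
    · intro k hk
      rw [htf] at hk
      simp only [Finset.mem_filter, Finset.mem_Icc] at hk
      rw [hsf]
      simp only [Finset.mem_filter, Finset.mem_range]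
      constructor
      · omega
      · refine ⟨k, by omega⟩
    · intro j hj
      rw [hsf] at hj
      simp only [Finset.mem_filter, Finset.mem_range] at hj
      obtain ⟨hj1, ⟨k', hk'⟩⟩ := hj
      show (((m:ℤ)+1+3*(((j:ℤ)-((m:ℤ)+1))/3)).toNat) = j
      omega
    · intro k hk
      rw [htf] at hk
      simp only [Finset.mem_filter, Finset.mem_Icc] at hk
      show (((((m:ℤ)+1+3*k).toNat : ℕ):ℤ) - ((m:ℤ)+1))/3 = k
      omega
    · intro j hj
      rw [hsf] at hj
      simp only [Finset.mem_filter, Finset.mem_range] at hj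
      obtain ⟨hj1, hdvd⟩ := hj
      obtain ⟨k, hk⟩ := hdvd
      have hdiv : ((j:ℤ)-((m:ℤ)+1))/3 = k := by
        rw [hk]; exact Int.mul_ediv_cancel_left _ (by norm_num)
      simp only [hG, hH, hdiv]
      have hjk : (m:ℤ)+1+3*k = (j:ℤ) := by omega
      rw [hjk, Int.toNat_natCast, neg_one_zpow_natAbs]
      have hd1 := half_cast j
      have hd2 : 2*((9*k^2+3*k)/2) = 9*k^2+3*k := by
        refine Int.mul_ediv_cancel' ?_
        obtain ⟨r, hr⟩ := Int.even_mul_succ_self (3*k)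
        exact ⟨3*k*(3*k+1)/2, by rw [show (9*k^2+3*k) = 3*k*(3*k+1) by ring]; omega⟩
      have hd3 : (2:ℤ)*(c:ℤ) = ((m:ℤ)+1)*(m:ℤ) := by exact_mod_cast hc2
      have hEj : E j = -(c:ℤ) + (9*k^2+3*k)/2 := by
        have h2g : 2*(E j) = 2*(-(c:ℤ) + (9*k^2+3*k)/2) := by
          rw [hE]
          show 2*(((j*(j-1)/2 : ℕ):ℤ) + (1-((m:ℤ)+1))*(j:ℤ)) = 2*(-(c:ℤ) + (9*k^2+3*k)/2)
          linear_combination hd1 + hd3 - hd2 + (3*k+(j:ℤ)-(m:ℤ))*hk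
        exact mul_left_cancel₀ (by norm_num : (2:ℤ) ≠ 0) h2g
      rw [hEj, zpow_add₀ hq, zpow_neg, zpow_natCast]
      ring
  -- final assembly
  have key : 3 * (q^c)⁻¹ * (∑ k ∈ Finset.Icc (-((m:ℤ)+1)) ((m:ℤ)+1),
      ((-1:K) ^ k.natAbs * q ^ ((9*k^2+3*k)/2) *
        (if 0 ≤ (m:ℤ)+1+3*k ∧ (m:ℤ)+1+3*k ≤ 2*(m+1) then
          ψ (gbinom (2*(m+1)) ((m:ℤ)+1+3*k).toNat) else 0)))
      = 3 * (q^c)⁻¹ * ((1 + q^(m+1)) * P) := by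
    rw [R1, Finset.mul_sum, ← M, ← L1, Fneg, Fpair ζ hζ, Fpair (1-ζ) (one_sub_rel hζ)]
    have hp1 : ζ^(-((m:ℤ)+1)) * ((1+ζ) * (1+ζ*q^(m+1)) * ζ^m * (q^c)⁻¹ * P)
        = (1-ζ) * ((1+ζ) * (1+ζ*q^(m+1)) * (q^c)⁻¹ * P) := by
      rw [show ζ^(-((m:ℤ)+1)) * ((1+ζ) * (1+ζ*q^(m+1)) * ζ^m * (q^c)⁻¹ * P)
          = (ζ^(-((m:ℤ)+1)) * ζ^(m:ℕ)) * ((1+ζ) * (1+ζ*q^(m+1)) * (q^c)⁻¹ * P) by ring,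
        ← zpow_natCast ζ m, ← zpow_add₀ hζ0, show -((m:ℤ)+1)+(m:ℤ) = -1 by ring,
        zpow_neg_one, hζinv]
    have hp2 : (1-ζ)^(-((m:ℤ)+1)) * ((1+(1-ζ)) * (1+(1-ζ)*q^(m+1)) * (1-ζ)^m * (q^c)⁻¹ * P)
        = ζ * ((1+(1-ζ)) * (1+(1-ζ)*q^(m+1)) * (q^c)⁻¹ * P) := by
      rw [show (1-ζ)^(-((m:ℤ)+1)) * ((1+(1-ζ)) * (1+(1-ζ)*q^(m+1)) * (1-ζ)^m * (q^c)⁻¹ * P)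
          = ((1-ζ)^(-((m:ℤ)+1)) * (1-ζ)^(m:ℕ)) * ((1+(1-ζ)) * (1+(1-ζ)*q^(m+1)) * (q^c)⁻¹ * P) by ring,
        ← zpow_natCast (1-ζ) m, ← zpow_add₀ hζ0', show -((m:ℤ)+1)+(m:ℤ) = -1 by ring,
        zpow_neg_one, hζinv']
    rw [hp1, hp2]
    linear_combination ((q^c)⁻¹*P*(-2 - 3*q^(m+1))) * hζ
  have h3q : (3 * (q^c)⁻¹ : K) ≠ 0 := by
    apply mul_ne_zero h3
    exact inv_ne_zero hqc
  exact mul_left_cancel₀ h3q key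

end
noncomputable def zC : ℂ := ⟨1/2, Real.sqrt 3 / 2⟩

lemma zC_rel : zC^2 = zC - 1 := by
  have h3' := Real.mul_self_sqrt (show (0:ℝ) ≤ 3 by norm_num)
  apply Complex.ext <;>
    simp [zC, pow_two, Complex.mul_re, Complex.mul_im, Complex.sub_re, Complex.sub_im] <;>
    nlinarith [h3']

theorem stmt5 (n : ℕ) (hn : 0 < n) :
    ∑ᶠ k : ℤ, ((-1 : Polynomial ℤ) ^ k.natAbs *
        Polynomial.X ^ ((9 * k ^ 2 + 3 * k) / 2).toNat *
        gbinomZ (2 * n) ((n : ℤ) + 3 * k)) =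
      (1 + Polynomial.X ^ n) *
        ∏ i ∈ Finset.range (n - 1),
          (1 + Polynomial.X ^ (i + 1) + Polynomial.X ^ (2 * (i + 1))) := by
  obtain ⟨m, rfl⟩ : ∃ m, n = m + 1 := ⟨n - 1, by omega⟩
  clear hn
  set K := FractionRing (Polynomial ℂ) with hK
  set ι : Polynomial ℂ →+* K := (algebraMap (Polynomial ℂ) K : Polynomial ℂ →+* K) with hι
  set φ : Polynomial ℤ →+* K := ι.comp (Polynomial.mapRingHom (Int.castRingHom ℂ)) with hφ
  have hφinj : Function.Injective φ :=
    (IsFractionRing.injective (Polynomial ℂ) K).comp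
      (Polynomial.map_injective _ Int.cast_injective)
  have hq' : φ Polynomial.X ≠ 0 := by
    intro h
    have : (Polynomial.X : Polynomial ℤ) = 0 := hφinj (by rw [h, map_zero])
    exact Polynomial.X_ne_zero this
  set q : K := φ Polynomial.X with hqdef
  set ζ : K := ι (Polynomial.C zC) with hζdef
  have hζ : ζ^2 = ζ - 1 := by
    rw [hζdef, ← map_pow, ← Polynomial.C_pow, zC_rel, Polynomial.C_sub, Polynomial.C_1,
      map_sub, map_one]
  have h3 : (3:K) ≠ 0 := by
    intro h
    have h0 : φ 3 = 0 := by rw [map_ofNat]; exact_mod_cast h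
    have : (3 : Polynomial ℤ) = 0 := hφinj (by rw [h0, map_zero])
    norm_num at this
  -- reduce finsum
  set f : ℤ → Polynomial ℤ := fun k => (-1 : Polynomial ℤ) ^ k.natAbs *
      Polynomial.X ^ ((9 * k ^ 2 + 3 * k) / 2).toNat *
      gbinomZ (2 * (m+1)) (((m+1 : ℕ) : ℤ) + 3 * k) with hf
  have hsupp : Function.support f ⊆ (Finset.Icc (-((m:ℤ)+1)) ((m:ℤ)+1) : Finset ℤ) := by
    intro k hk
    simp only [Finset.coe_Icc, Set.mem_Icc]
    by_contra hout
    apply hk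
    rw [hf]
    show (-1 : Polynomial ℤ) ^ k.natAbs * Polynomial.X ^ ((9 * k ^ 2 + 3 * k) / 2).toNat *
      gbinomZ (2 * (m+1)) (((m+1 : ℕ) : ℤ) + 3 * k) = 0
    rcases lt_or_ge (((m+1 : ℕ) : ℤ) + 3 * k) 0 with hneg | hpos
    · rw [gbinomZ, if_neg (by omega), mul_zero]
    · have hbig : 2*(m+1) < (((m+1 : ℕ) : ℤ) + 3 * k).toNat := by
        push_cast at hout hpos ⊢
        omega
      rw [gbinomZ, if_pos hpos, gbinom_eq_zero hbig, mul_zero]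
  rw [finsum_eq_sum_of_support_subset f hsupp]
  apply hφinj
  rw [map_sum]
  have hterm : ∀ k ∈ Finset.Icc (-((m:ℤ)+1)) ((m:ℤ)+1),
      φ (f k) = (-1:K) ^ k.natAbs * q ^ ((9*k^2+3*k)/2) *
        (if 0 ≤ (m:ℤ)+1+3*k ∧ (m:ℤ)+1+3*k ≤ 2*(m+1) then
          φ (gbinom (2*(m+1)) ((m:ℤ)+1+3*k).toNat) else 0) := by
    intro k _
    rw [hf]
    show φ ((-1 : Polynomial ℤ) ^ k.natAbs * Polynomial.X ^ ((9 * k ^ 2 + 3 * k) / 2).toNat *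
      gbinomZ (2 * (m+1)) (((m+1 : ℕ) : ℤ) + 3 * k)) = _
    rw [map_mul, map_mul, map_pow, map_neg, map_one, map_pow, ← hqdef]
    have hcast : (((m+1 : ℕ) : ℤ) + 3 * k) = ((m:ℤ)+1+3*k) := by push_cast; ring
    have hexp : (q : K) ^ ((9 * k ^ 2 + 3 * k) / 2).toNat = q ^ ((9*k^2+3*k)/2 : ℤ) := by
      rw [← zpow_natCast q]
      congr 1
      refine Int.toNat_of_nonneg (Int.ediv_nonneg ?_ (by norm_num))
      rcases le_or_gt 0 k with h | h <;> nlinarith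
    rw [hexp]
    congr 1
    rw [gbinomZ, hcast]
    rcases le_or_gt 0 ((m:ℤ)+1+3*k) with hpos | hneg
    · rw [if_pos hpos]
      rcases le_or_gt ((m:ℤ)+1+3*k) (2*(m+1)) with hle | hgt
      · rw [if_pos ⟨hpos, hle⟩]
      · rw [if_neg (by omega), gbinom_eq_zero (show 2*(m+1) < ((m:ℤ)+1+3*k).toNat by omega),
          map_zero]
    · rw [if_neg (by omega), if_neg (by omega), map_zero]
  rw [Finset.sum_congr rfl hterm]
  refine (core φ ζ hq' hζ h3 m).trans ?_
  rw [map_mul, map_add, map_one, map_pow, map_prod, ← hqdef]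
  simp only [Nat.add_sub_cancel]
  congr 1
  refine Finset.prod_congr rfl (fun i _ => ?_)
  rw [map_add, map_add, map_one, map_pow, map_pow, ← hqdef]
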